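/- Let $H\in(1/2,1)$ be fixed and define $C_{\infty,H}(\tau):=e^{-\tau}\frac{\int_0^\infty\int_{-\tau}^\infty e^{-u}e^{-v}|u-v|^{2H-2}\,du\,dv}{\int_0^\infty\int_0^\infty e^{-u}e^{-v}|u-v|^{2H-2}\,du\,dv}$ for $\tau\ge 0$. Then $\lim_{\tau\to\infty}\tau^{2-2H} C_{\infty,H}(\tau)\cdot\left(\int_0^\infty\int_0^\infty e^{-u}e^{-v}|u-v|^{2H-2}dudv\right)=1$; in particular $C_{\infty,H}$ is not integrable on $[0,\infty)$. -/

import Mathlib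

/-!
Substituting `v = w - τ` turns `e^{-τ}` times the numerator of `C_{∞,H}(τ)` into
`G(τ) = ∫∫_{u,w>0} e^{-u} e^{-w} |u - w + τ|^α` with `α = 2H - 2 ∈ (-1, 0)`, and the denominator
is `G(0)`, finite because `|x|^α` is locally integrable. For `τ > 0` the rescaled kernel is
`τ^{-α} |u - w + τ|^α = |1 + (u - w)/τ|^α`. On `w ≤ u + τ/2` it is bounded by `2^{-α}` and tends
to `1`, so dominated convergence gives `1` there. The singular line `w = u + τ` lies in
`w > u + τ/2`, where `e^{-u-w} ≤ e^{-τ/4} e^{-3u/2} e^{-w/2}`, so that part is `O(τ^{-α} e^{-τ/4})`.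
Thus `C_{∞,H}(τ) ~ τ^α / G(0)`, which is not integrable at infinity since `α ≥ -1`.
-/

open MeasureTheory Real Set
open scoped ENNReal

/-- The limiting correlation function `C_{∞,H}`. -/
noncomputable def CinftyH (H τ : ℝ) : ℝ :=
  Real.exp (-τ) *
    (∫⁻ u in Ioi (0:ℝ), ∫⁻ v in Ioi (-τ),
        ENNReal.ofReal (Real.exp (-u) * Real.exp (-v) * |u - v| ^ (2*H - 2))).toReal /
    (∫⁻ u in Ioi (0:ℝ), ∫⁻ v in Ioi (0:ℝ),
        ENNReal.ofReal (Real.exp (-u) * Real.exp (-v) * |u - v| ^ (2*H - 2))).toReal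

open Filter Topology

lemma lintegral_exp_neg_mul_Ioi {c : ℝ} (hc : 0 < c) :
    ∫⁻ x in Ioi (0:ℝ), ENNReal.ofReal (exp (-(c * x))) = ENNReal.ofReal c⁻¹ := by
  have hint : IntegrableOn (fun x => exp (-c * x)) (Ioi 0) :=
    integrableOn_exp_mul_Ioi (neg_neg_of_pos hc) 0
  simp_rw [← neg_mul]
  rw [← ofReal_integral_eq_lintegral_ofReal hint (.of_forall fun x => (exp_pos _).le),
    integral_exp_mul_Ioi (neg_neg_of_pos hc)]
  simp [neg_div]

lemma setLIntegral_exp_neg_mul_exp_neg :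
    ∫⁻ p in Ioi (0:ℝ) ×ˢ Ioi (0:ℝ), ENNReal.ofReal (exp (-p.1) * exp (-p.2)) = 1 := by
  have h : ∫⁻ x in Ioi (0:ℝ), ENNReal.ofReal (exp (-x)) = 1 := by
    simpa using lintegral_exp_neg_mul_Ioi one_pos
  simp_rw [ENNReal.ofReal_mul (exp_pos _).le]
  rw [Measure.volume_eq_prod, ← Measure.prod_restrict,
    lintegral_prod_mul (f := fun x => ENNReal.ofReal (exp (-x)))
      (g := fun x => ENNReal.ofReal (exp (-x))) (by fun_prop) (by fun_prop), h, one_mul]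

lemma not_integrableOn_Ici_of_tendsto_rpow_mul {f : ℝ → ℝ} {r c : ℝ} (hr : r ≤ 1) (hc : 0 < c)
    (h : Tendsto (fun x => x ^ r * f x) atTop (𝓝 c)) (a : ℝ) : ¬ IntegrableOn f (Ici a) := by
  intro hf
  have hbigO : (fun x : ℝ => x ^ (-r)) =O[atTop] f := by
    refine Asymptotics.IsBigO.of_bound (2 / c) ?_
    filter_upwards [h.eventually (lt_mem_nhds (half_lt_self hc)), eventually_gt_atTop 0]
      with x hx hx₀
    have hxr : 0 < x ^ r := rpow_pos_of_pos hx₀ r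
    have : c / 2 < x ^ r * ‖f x‖ :=
      hx.trans_le (mul_le_mul_of_nonneg_left (le_abs_self _) hxr.le)
    rw [norm_of_nonneg (rpow_nonneg hx₀.le _), rpow_neg hx₀.le, inv_le_iff_one_le_mul₀' hxr]
    calc (1 : ℝ) = 2 / c * (c / 2) := by field_simp
      _ ≤ x ^ r * (2 / c * ‖f x‖) := by nlinarith [div_pos two_pos hc]
  have hrpow := hbigO.integrableAtFilter
    (by fun_prop : Measurable fun x : ℝ => x ^ (-r)).aestronglyMeasurable.stronglyMeasurableAtFilter
    (integrableOn_Ici_iff_integrableAtFilter_atTop.1 hf).1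
  rw [integrableAtFilter_rpow_atTop_iff] at hrpow
  linarith

noncomputable def shiftedKernelIntegral (α τ : ℝ) : ℝ≥0∞ :=
  ∫⁻ p in Ioi (0:ℝ) ×ˢ Ioi (0:ℝ),
    ENNReal.ofReal (exp (-p.1) * exp (-p.2) * |p.1 - p.2 + τ| ^ α)

section

variable {α : ℝ}

lemma lintegral_abs_rpow_Ioo_lt_top (hα : -1 < α) :
    ∫⁻ y in Ioo (-1:ℝ) 1, ENNReal.ofReal (|y| ^ α) < ∞ := by
  have hpos : IntervalIntegrable (fun y : ℝ => |y| ^ α) volume 0 1 := by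
    refine (intervalIntegral.intervalIntegrable_rpow' hα).congr ?_
    intro y hy
    rw [uIoc_of_le zero_le_one] at hy
    simp [abs_of_pos hy.1]
  have hneg : IntervalIntegrable (fun y : ℝ => |y| ^ α) volume (-1) 0 := by
    simpa using (IntervalIntegrable.iff_comp_neg (f := fun y : ℝ => |y| ^ α)).1 hpos.symm
  have := (intervalIntegrable_iff_integrableOn_Ioo_of_le (by norm_num)).1 (hneg.trans hpos)
  exact this.setLIntegral_lt_top

lemma lintegral_exp_neg_mul_abs_sub_rpow_le {c : ℝ} (hα : α ≤ 0) (hc : 0 < c) (t : ℝ) :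
    ∫⁻ w in Ioi (0:ℝ), ENNReal.ofReal (exp (-(c * w)) * |t - w| ^ α)
      ≤ ENNReal.ofReal c⁻¹ + ∫⁻ y in Ioo (-1:ℝ) 1, ENNReal.ofReal (|y| ^ α) := by
  set g : ℝ → ℝ≥0∞ := (Ioo (-1:ℝ) 1).indicator fun y => ENNReal.ofReal (|y| ^ α) with hg
  have hsplit : ∀ w ∈ Ioi (0:ℝ), ENNReal.ofReal (exp (-(c * w)) * |t - w| ^ α)
      ≤ ENNReal.ofReal (exp (-(c * w))) + g (t - w) := by
    intro w hw
    rcases le_or_gt 1 |t - w| with hfar | hnear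
    · refine le_add_right (ENNReal.ofReal_le_ofReal ?_)
      exact mul_le_of_le_one_right (exp_pos _).le (rpow_le_one_of_one_le_of_nonpos hfar hα)
    · have hmem : t - w ∈ Ioo (-1:ℝ) 1 := abs_lt.1 hnear
      refine le_add_left ?_
      rw [hg, indicator_of_mem hmem]
      refine ENNReal.ofReal_le_ofReal (mul_le_of_le_one_left (by positivity) ?_)
      exact exp_le_one_iff.2 (neg_nonpos.2 (mul_pos hc hw).le)
  calc ∫⁻ w in Ioi (0:ℝ), ENNReal.ofReal (exp (-(c * w)) * |t - w| ^ α)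
      ≤ ∫⁻ w in Ioi (0:ℝ), (ENNReal.ofReal (exp (-(c * w))) + g (t - w)) :=
        setLIntegral_mono' measurableSet_Ioi hsplit
    _ = (∫⁻ w in Ioi (0:ℝ), ENNReal.ofReal (exp (-(c * w)))) + ∫⁻ w in Ioi (0:ℝ), g (t - w) :=
        lintegral_add_left (by fun_prop) _
    _ ≤ ENNReal.ofReal c⁻¹ + ∫⁻ w, g (t - w) :=
        add_le_add (lintegral_exp_neg_mul_Ioi hc).le (setLIntegral_le_lintegral _ _)
    _ = _ := by rw [lintegral_sub_left_eq_self, lintegral_indicator measurableSet_Ioo]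

lemma setLIntegral_exp_neg_mul_abs_sub_rpow_le {a b : ℝ} (hα : α ≤ 0) (ha : 0 < a) (hb : 0 < b)
    (τ : ℝ) :
    ∫⁻ p in Ioi (0:ℝ) ×ˢ Ioi (0:ℝ),
        ENNReal.ofReal (exp (-(a * p.1)) * exp (-(b * p.2)) * |p.1 - p.2 + τ| ^ α)
      ≤ ENNReal.ofReal a⁻¹ *
          (ENNReal.ofReal b⁻¹ + ∫⁻ y in Ioo (-1:ℝ) 1, ENNReal.ofReal (|y| ^ α)) := by
  rw [Measure.volume_eq_prod, setLIntegral_prod _ (by fun_prop)]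
  calc ∫⁻ u in Ioi (0:ℝ), ∫⁻ w in Ioi (0:ℝ),
        ENNReal.ofReal (exp (-(a * u)) * exp (-(b * w)) * |u - w + τ| ^ α)
      = ∫⁻ u in Ioi (0:ℝ), ENNReal.ofReal (exp (-(a * u))) *
          ∫⁻ w in Ioi (0:ℝ), ENNReal.ofReal (exp (-(b * w)) * |u + τ - w| ^ α) := by
        refine lintegral_congr fun u => ?_
        rw [← lintegral_const_mul' _ _ ENNReal.ofReal_ne_top]
        refine lintegral_congr fun w => ?_
        rw [← ENNReal.ofReal_mul (exp_pos _).le, mul_assoc, sub_add_eq_add_sub, add_sub_right_comm]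
    _ ≤ ∫⁻ u in Ioi (0:ℝ), ENNReal.ofReal (exp (-(a * u))) *
          (ENNReal.ofReal b⁻¹ + ∫⁻ y in Ioo (-1:ℝ) 1, ENNReal.ofReal (|y| ^ α)) :=
        lintegral_mono fun u => mul_le_mul_right
          (lintegral_exp_neg_mul_abs_sub_rpow_le hα hb (u + τ)) _
    _ = _ := by rw [lintegral_mul_const _ (by fun_prop), lintegral_exp_neg_mul_Ioi ha]

lemma shiftedKernelIntegral_lt_top (hα₁ : -1 < α) (hα₀ : α ≤ 0) (τ : ℝ) :
    shiftedKernelIntegral α τ < ∞ := by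
  have h := setLIntegral_exp_neg_mul_abs_sub_rpow_le hα₀ one_pos one_pos τ
  simp only [one_mul, inv_one] at h
  exact h.trans_lt (ENNReal.mul_lt_top ENNReal.ofReal_lt_top
    (ENNReal.add_lt_top.2 ⟨ENNReal.ofReal_lt_top, lintegral_abs_rpow_Ioo_lt_top hα₁⟩))

lemma shiftedKernelIntegral_zero_pos (hα : α ≤ 0) : 0 < shiftedKernelIntegral α 0 := by
  set c : ℝ := exp (-1) * exp (-3) * 3 ^ α with hc
  have hbox : ∀ p ∈ Ioo (0:ℝ) 1 ×ˢ Ioo (2:ℝ) 3,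
      c ≤ exp (-p.1) * exp (-p.2) * |p.1 - p.2 + 0| ^ α := by
    rintro ⟨u, w⟩ ⟨⟨hu₀, hu₁⟩, ⟨hw₂, hw₃⟩⟩
    have hdist : |u - w + 0| = w - u := by
      rw [add_zero, abs_sub_comm, abs_of_pos (by linarith)]
    rw [hdist, hc]
    gcongr ?_ * ?_ * ?_
    · exact exp_le_exp.2 (by linarith)
    · exact exp_le_exp.2 (by linarith)
    · exact rpow_le_rpow_of_nonpos (by linarith) (by linarith) hα
  calc (0 : ℝ≥0∞) < ENNReal.ofReal c := ENNReal.ofReal_pos.2 (by positivity)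
    _ = ∫⁻ _ in Ioo (0:ℝ) 1 ×ˢ Ioo (2:ℝ) 3, ENNReal.ofReal c := by
        rw [setLIntegral_const, Measure.volume_eq_prod, Measure.prod_prod, Real.volume_Ioo,
          Real.volume_Ioo]
        norm_num
    _ ≤ ∫⁻ p in Ioo (0:ℝ) 1 ×ˢ Ioo (2:ℝ) 3,
          ENNReal.ofReal (exp (-p.1) * exp (-p.2) * |p.1 - p.2 + 0| ^ α) :=
        setLIntegral_mono' (measurableSet_Ioo.prod measurableSet_Ioo)
          fun p hp => ENNReal.ofReal_le_ofReal (hbox p hp)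
    _ ≤ shiftedKernelIntegral α 0 :=
        lintegral_mono_set (prod_mono Ioo_subset_Ioi_self
          (Ioo_subset_Ioi_self.trans (Ioi_subset_Ioi (by norm_num))))

lemma lintegral_Ioi_neg_eq_shift (τ u : ℝ) :
    ∫⁻ v in Ioi (-τ), ENNReal.ofReal (exp (-u) * exp (-v) * |u - v| ^ α)
      = ENNReal.ofReal (exp τ) *
          ∫⁻ w in Ioi (0:ℝ), ENNReal.ofReal (exp (-u) * exp (-w) * |u - w + τ| ^ α) := by
  rw [← (measurePreserving_add_right volume (-τ)).setLIntegral_comp_preimage_emb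
    (measurableEmbedding_addRight (-τ)), preimage_add_const_Ioi, neg_sub_neg, sub_self,
    ← lintegral_const_mul' _ _ ENNReal.ofReal_ne_top]
  refine lintegral_congr fun w => ?_
  rw [← ENNReal.ofReal_mul (exp_pos τ).le, show -(w + -τ) = τ + -w by ring, exp_add]
  ring_nf

lemma lintegral_lintegral_Ioi_neg_eq (τ : ℝ) :
    ∫⁻ u in Ioi (0:ℝ), ∫⁻ v in Ioi (-τ), ENNReal.ofReal (exp (-u) * exp (-v) * |u - v| ^ α)
      = ENNReal.ofReal (exp τ) * shiftedKernelIntegral α τ := by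
  rw [shiftedKernelIntegral, Measure.volume_eq_prod, setLIntegral_prod _ (by fun_prop),
    ← lintegral_const_mul' _ _ ENNReal.ofReal_ne_top]
  exact lintegral_congr fun u => lintegral_Ioi_neg_eq_shift τ u

lemma lintegral_lintegral_Ioi_zero_eq :
    ∫⁻ u in Ioi (0:ℝ), ∫⁻ v in Ioi (0:ℝ), ENNReal.ofReal (exp (-u) * exp (-v) * |u - v| ^ α)
      = shiftedKernelIntegral α 0 := by
  simpa using lintegral_lintegral_Ioi_neg_eq (α := α) 0

lemma rpow_neg_mul_abs_add_rpow {τ : ℝ} (hτ : 0 < τ) (x : ℝ) :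
    τ ^ (-α) * |x + τ| ^ α = |1 + x / τ| ^ α := by
  rw [show 1 + x / τ = (x + τ) / τ by field_simp; ring, abs_div, abs_of_pos hτ,
    div_rpow (abs_nonneg _) hτ.le, rpow_neg hτ.le, div_eq_mul_inv, mul_comm]

lemma abs_one_add_div_rpow_le (hα : α ≤ 0) {τ x : ℝ} (hτ : 0 < τ) (hx : -(τ / 2) ≤ x) :
    |1 + x / τ| ^ α ≤ 2 ^ (-α) := by
  have hhalf : 1 / 2 ≤ 1 + x / τ := by
    have : -(1 / 2) ≤ x / τ := by
      rw [le_div_iff₀ hτ]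
      linarith
    linarith
  calc |1 + x / τ| ^ α ≤ (1 / 2) ^ α :=
        rpow_le_rpow_of_nonpos (by norm_num) (hhalf.trans (le_abs_self _)) hα
    _ = 2 ^ (-α) := by rw [one_div, inv_rpow zero_le_two, rpow_neg zero_le_two]

lemma tendsto_abs_one_add_div_rpow (x : ℝ) :
    Tendsto (fun τ : ℝ => |1 + x / τ| ^ α) atTop (𝓝 1) := by
  simpa using (((tendsto_const_nhds (x := x)).div_atTop tendsto_id).const_add 1).abs.rpow_const
    (p := α) (Or.inl (by norm_num))

lemma tendsto_rpow_neg_mul_lintegral_regular_part (hα : α ≤ 0) :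
    Tendsto (fun τ : ℝ => ENNReal.ofReal (τ ^ (-α)) *
        ∫⁻ p in {p : ℝ × ℝ | p.2 ≤ p.1 + τ / 2},
          ENNReal.ofReal (exp (-p.1) * exp (-p.2) * |p.1 - p.2 + τ| ^ α)
          ∂volume.restrict (Ioi (0:ℝ) ×ˢ Ioi (0:ℝ)))
      atTop (𝓝 1) := by
  have hA : ∀ τ : ℝ, MeasurableSet {p : ℝ × ℝ | p.2 ≤ p.1 + τ / 2} := fun τ =>
    measurableSet_le measurable_snd (measurable_fst.add_const _)
  set F : ℝ → ℝ × ℝ → ℝ≥0∞ := fun τ => {p : ℝ × ℝ | p.2 ≤ p.1 + τ / 2}.indicator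
    fun p => ENNReal.ofReal (exp (-p.1) * exp (-p.2) * |1 + (p.1 - p.2) / τ| ^ α) with hF
  have hrescale : ∀ᶠ τ : ℝ in atTop, ∫⁻ p in Ioi (0:ℝ) ×ˢ Ioi (0:ℝ), F τ p
      = ENNReal.ofReal (τ ^ (-α)) * ∫⁻ p in {p : ℝ × ℝ | p.2 ≤ p.1 + τ / 2},
          ENNReal.ofReal (exp (-p.1) * exp (-p.2) * |p.1 - p.2 + τ| ^ α)
          ∂volume.restrict (Ioi (0:ℝ) ×ˢ Ioi (0:ℝ)) := by
    filter_upwards [eventually_gt_atTop 0] with τ hτ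
    rw [← lintegral_indicator (hA τ), ← lintegral_const_mul' _ _ ENNReal.ofReal_ne_top]
    refine lintegral_congr fun p => ?_
    simp only [hF, indicator]
    split_ifs
    · rw [← ENNReal.ofReal_mul (rpow_nonneg hτ.le _), ← rpow_neg_mul_abs_add_rpow hτ]
      ring_nf
    · rw [mul_zero]
  have hlim := tendsto_lintegral_filter_of_dominated_convergence
    (μ := volume.restrict (Ioi (0:ℝ) ×ˢ Ioi (0:ℝ))) (l := atTop) (F := F)
    (f := fun p => ENNReal.ofReal (exp (-p.1) * exp (-p.2)))
    (fun p => ENNReal.ofReal (2 ^ (-α)) * ENNReal.ofReal (exp (-p.1) * exp (-p.2))) ?_ ?_ ?_ ?_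
  · rw [setLIntegral_exp_neg_mul_exp_neg] at hlim
    exact hlim.congr' hrescale
  · exact .of_forall fun τ => Measurable.indicator (by fun_prop) (hA τ)
  · filter_upwards [eventually_gt_atTop 0] with τ hτ
    refine .of_forall fun p => indicator_apply_le' (fun hp => ?_) fun _ => zero_le
    have hx : -(τ / 2) ≤ p.1 - p.2 := by linarith [show p.2 ≤ p.1 + τ / 2 from hp]
    rw [← ENNReal.ofReal_mul (by positivity), mul_comm (2 ^ (-α) : ℝ)]
    exact ENNReal.ofReal_le_ofReal (mul_le_mul_of_nonneg_left
      (abs_one_add_div_rpow_le hα hτ hx) (by positivity))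
  · rw [lintegral_const_mul _ (by fun_prop), setLIntegral_exp_neg_mul_exp_neg, mul_one]
    exact ENNReal.ofReal_ne_top
  · refine .of_forall fun p => ?_
    have h := ENNReal.tendsto_ofReal
      ((tendsto_abs_one_add_div_rpow (α := α) (p.1 - p.2)).const_mul (exp (-p.1) * exp (-p.2)))
    rw [mul_one] at h
    refine h.congr' ?_
    filter_upwards [eventually_ge_atTop (2 * (p.2 - p.1))] with τ hτ
    simp only [hF]
    rw [indicator_of_mem (show p ∈ {p : ℝ × ℝ | p.2 ≤ p.1 + τ / 2} from
      (by linarith : p.2 ≤ p.1 + τ / 2))]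

lemma lintegral_singular_part_le (hα : α ≤ 0) (τ : ℝ) :
    ∫⁻ p in {p : ℝ × ℝ | p.2 ≤ p.1 + τ / 2}ᶜ,
        ENNReal.ofReal (exp (-p.1) * exp (-p.2) * |p.1 - p.2 + τ| ^ α)
        ∂volume.restrict (Ioi (0:ℝ) ×ˢ Ioi (0:ℝ))
      ≤ ENNReal.ofReal (exp (-(τ / 4))) * (ENNReal.ofReal (3 / 2)⁻¹ *
          (ENNReal.ofReal (1 / 2)⁻¹ + ∫⁻ y in Ioo (-1:ℝ) 1, ENNReal.ofReal (|y| ^ α))) := by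
  have hdecay : ∀ p ∈ {p : ℝ × ℝ | p.2 ≤ p.1 + τ / 2}ᶜ,
      ENNReal.ofReal (exp (-p.1) * exp (-p.2) * |p.1 - p.2 + τ| ^ α)
        ≤ ENNReal.ofReal (exp (-(τ / 4))) * ENNReal.ofReal
            (exp (-(3 / 2 * p.1)) * exp (-(1 / 2 * p.2)) * |p.1 - p.2 + τ| ^ α) := by
    intro p hp
    have hfar : p.1 + τ / 2 < p.2 := not_le.1 hp
    rw [← ENNReal.ofReal_mul (exp_pos _).le, ← mul_assoc, ← mul_assoc]
    refine ENNReal.ofReal_le_ofReal (mul_le_mul_of_nonneg_right ?_ (by positivity))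
    rw [← exp_add, ← exp_add, ← exp_add]
    exact exp_le_exp.2 (by linarith)
  calc _ ≤ ∫⁻ p in {p : ℝ × ℝ | p.2 ≤ p.1 + τ / 2}ᶜ, ENNReal.ofReal (exp (-(τ / 4))) *
          ENNReal.ofReal (exp (-(3 / 2 * p.1)) * exp (-(1 / 2 * p.2)) * |p.1 - p.2 + τ| ^ α)
          ∂volume.restrict (Ioi (0:ℝ) ×ˢ Ioi (0:ℝ)) :=
        setLIntegral_mono' (measurableSet_le measurable_snd (measurable_fst.add_const _)).compl
          hdecay
    _ ≤ ∫⁻ p in Ioi (0:ℝ) ×ˢ Ioi (0:ℝ), ENNReal.ofReal (exp (-(τ / 4))) *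
          ENNReal.ofReal (exp (-(3 / 2 * p.1)) * exp (-(1 / 2 * p.2)) * |p.1 - p.2 + τ| ^ α) :=
        setLIntegral_le_lintegral _ _
    _ ≤ _ := by
        rw [lintegral_const_mul' _ _ ENNReal.ofReal_ne_top]
        exact mul_le_mul_right
          (setLIntegral_exp_neg_mul_abs_sub_rpow_le hα (by norm_num) (by norm_num) τ) _

theorem tendsto_rpow_neg_mul_shiftedKernelIntegral (hα₁ : -1 < α) (hα₀ : α ≤ 0) :
    Tendsto (fun τ : ℝ => ENNReal.ofReal (τ ^ (-α)) * shiftedKernelIntegral α τ)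
      atTop (𝓝 1) := by
  set M : ℝ≥0∞ := ENNReal.ofReal (3 / 2)⁻¹ *
    (ENNReal.ofReal (1 / 2)⁻¹ + ∫⁻ y in Ioo (-1:ℝ) 1, ENNReal.ofReal (|y| ^ α))
  have hM : M ≠ ∞ := ENNReal.mul_ne_top ENNReal.ofReal_ne_top
    (ENNReal.add_ne_top.2 ⟨ENNReal.ofReal_ne_top, (lintegral_abs_rpow_Ioo_lt_top hα₁).ne⟩)
  have hfar : Tendsto (fun τ : ℝ => ENNReal.ofReal (τ ^ (-α)) *
      ∫⁻ p in {p : ℝ × ℝ | p.2 ≤ p.1 + τ / 2}ᶜ,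
        ENNReal.ofReal (exp (-p.1) * exp (-p.2) * |p.1 - p.2 + τ| ^ α)
        ∂volume.restrict (Ioi (0:ℝ) ×ˢ Ioi (0:ℝ))) atTop (𝓝 0) := by
    have hbound : Tendsto (fun τ : ℝ => ENNReal.ofReal (τ ^ (-α) * exp (-(1 / 4) * τ)) * M)
        atTop (𝓝 0) := by
      simpa using ENNReal.Tendsto.mul_const (ENNReal.tendsto_ofReal
        (tendsto_rpow_mul_exp_neg_mul_atTop_nhds_zero (-α) (1 / 4) (by norm_num))) (Or.inr hM)
    refine tendsto_of_tendsto_of_tendsto_of_le_of_le' tendsto_const_nhds hbound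
      (.of_forall fun _ => zero_le) ?_
    filter_upwards [eventually_gt_atTop 0] with τ hτ
    calc _ ≤ ENNReal.ofReal (τ ^ (-α)) * (ENNReal.ofReal (exp (-(τ / 4))) * M) :=
          mul_le_mul_right (lintegral_singular_part_le hα₀ τ) _
      _ = _ := by
          rw [← mul_assoc, ← ENNReal.ofReal_mul (rpow_nonneg hτ.le _)]
          ring_nf
  have h := (tendsto_rpow_neg_mul_lintegral_regular_part hα₀).add hfar
  rw [add_zero] at h
  refine h.congr fun τ => ?_
  rw [← mul_add, lintegral_add_compl _
    (measurableSet_le measurable_snd (measurable_fst.add_const _))]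
  rfl

end

lemma CinftyH_eq_div (H τ : ℝ) :
    CinftyH H τ = (shiftedKernelIntegral (2 * H - 2) τ).toReal /
      (shiftedKernelIntegral (2 * H - 2) 0).toReal := by
  rw [CinftyH, lintegral_lintegral_Ioi_neg_eq, lintegral_lintegral_Ioi_zero_eq, ENNReal.toReal_mul,
    ENNReal.toReal_ofReal (exp_pos τ).le, ← mul_assoc, ← exp_add, neg_add_cancel, exp_zero,
    one_mul]

theorem stmt_7 (H : ℝ) (hH1 : 1/2 < H) (hH2 : H < 1) :
    Filter.Tendsto
      (fun τ : ℝ => τ ^ (2 - 2*H) * CinftyH H τ *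
        (∫⁻ u in Ioi (0:ℝ), ∫⁻ v in Ioi (0:ℝ),
            ENNReal.ofReal (Real.exp (-u) * Real.exp (-v) * |u - v| ^ (2*H - 2))).toReal)
      Filter.atTop (nhds 1) ∧
    ¬ IntegrableOn (CinftyH H) (Ici (0:ℝ)) := by
  have hα₁ : -1 < 2 * H - 2 := by linarith
  have hα₀ : 2 * H - 2 ≤ 0 := by linarith
  set D := (shiftedKernelIntegral (2 * H - 2) 0).toReal
  have hD : 0 < D := ENNReal.toReal_pos (shiftedKernelIntegral_zero_pos hα₀).ne'
    (shiftedKernelIntegral_lt_top hα₁ hα₀ 0).ne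
  have hlim : Tendsto (fun τ : ℝ => τ ^ (2 - 2 * H) * CinftyH H τ * D) atTop (𝓝 1) := by
    have h := (ENNReal.tendsto_toReal ENNReal.one_ne_top).comp
      (tendsto_rpow_neg_mul_shiftedKernelIntegral hα₁ hα₀)
    rw [ENNReal.toReal_one] at h
    refine h.congr' ?_
    filter_upwards [eventually_gt_atTop 0] with τ hτ
    rw [Function.comp_apply, ENNReal.toReal_mul, ENNReal.toReal_ofReal (rpow_nonneg hτ.le _),
      CinftyH_eq_div, neg_sub, mul_assoc, div_mul_cancel₀ _ hD.ne']
  rw [lintegral_lintegral_Ioi_zero_eq]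
  refine ⟨hlim, not_integrableOn_Ici_of_tendsto_rpow_mul (r := 2 - 2 * H) (by linarith)
    (inv_pos.2 hD) ?_ 0⟩
  simpa [hD.ne'] using hlim.div_const D
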